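/- arXiv:1709.04780 — 2 statements merged into one kernel-verified Lean document; each statement's English description precedes it below -/
import Mathlib

section
/- Let α = 1 − c(1−p), p̃ = p/α, and for j ∈ ℤ₊ let A_j = {0, 1, …, j}. Then for all x, t, j ∈ ℤ₊: P_x(X_t ∈ A_j) − P_{x+1}(X_t ∈ A_j) = α^t · P_x^{(p̃)}(X_t = j), where P_x^{(p̃)} denotes the law of the chain with parameters (p̃, c) started at x. In particular, P_x(X_t ∈ A_j) − P_{x+1}(X_t ∈ A_j) ≥ α^t · P_x^{(p̃)}(X_t = j). -/
open scoped BigOperators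
open Filter

noncomputable section

/-- Probability mass function of a Binomial(n, ε) random variable, evaluated at k. -/
def binomPMF (n : ℕ) (ε : ℝ) (k : ℕ) : ℝ :=
  if k ≤ n then (n.choose k : ℝ) * ε ^ k * (1 - ε) ^ (n - k) else 0

/-- Transition function `p^{p,c}` of the random walk with binomial catastrophes:
`p^{p,c}(i, i+1) = p` and `p^{p,c}(i, j) = (1-p) C(i,j) (1-c)^j c^(i-j)` for `j ≤ i`. -/
def stepFn (p c : ℝ) (i j : ℕ) : ℝ :=
  (if j = i + 1 then p else 0) + (if j ≤ i then (1 - p) * binomPMF i (1 - c) j else 0)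

/-- `law p c x t j = P_x(X_t = j)`, the time-`t` distribution of the chain started at `x`. -/
def law (p c : ℝ) (x : ℕ) : ℕ → ℕ → ℝ
  | 0, j => if j = x then 1 else 0
  | t + 1, j => ∑' i, law p c x t i * stepFn p c i j

/-- Mass that a probability mass function assigns to a set `A ⊆ ℕ`. -/
def massOf (q : ℕ → ℝ) (A : Set ℕ) : ℝ := ∑' j, A.indicator q j

/-- Total variation distance between two distributions on ℕ (given by their pmfs):
the maximum over subsets `A ⊆ ℕ` of `|Q₁(A) - Q₂(A)|`. -/
def tvDist (q₁ q₂ : ℕ → ℝ) : ℝ := ⨆ A : Set ℕ, |massOf q₁ A - massOf q₂ A|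

/-! Summing the transition function over `{0, …, j}` from `i` and from `i + 1` and subtracting
gives `p [j = i + 1] + (1 - p)(1 - c) Bin(i, 1 - c)(j)`: the walk from `i + 1` has one more
individual, which survives a catastrophe with probability `1 - c`. Since `α - p = (1 - p)(1 - c)`,
this is `α p^{p̃,c}(i, j)`. The theorem then follows by induction on `t`: decomposing at the last
step and summing by parts in the intermediate state expresses the difference of distribution
functions at time `t + 1` through those at time `t`, weighted by the one-step differences. -/

open Finset

lemma binomPMF_eq_zero_of_lt {n k : ℕ} (ε : ℝ) (h : n < k) : binomPMF n ε k = 0 := by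
  simp [binomPMF, Nat.not_le.mpr h]

lemma binomPMF_succ_zero (n : ℕ) (ε : ℝ) : binomPMF (n + 1) ε 0 = (1 - ε) * binomPMF n ε 0 := by
  simp [binomPMF, pow_succ, mul_comm]

lemma binomPMF_succ_succ (n : ℕ) (ε : ℝ) (k : ℕ) :
    binomPMF (n + 1) ε (k + 1) = (1 - ε) * binomPMF n ε (k + 1) + ε * binomPMF n ε k := by
  unfold binomPMF
  obtain h | rfl | h := lt_trichotomy k n
  · rw [if_pos (by omega), if_pos (by omega), if_pos (by omega),
      show n + 1 - (k + 1) = n - (k + 1) + 1 by omega, show n - k = n - (k + 1) + 1 by omega,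
      Nat.choose_succ_succ]
    push_cast
    ring
  · rw [if_pos le_rfl, if_neg (by omega), if_pos le_rfl, Nat.choose_self, Nat.choose_self,
      Nat.sub_self, Nat.sub_self]
    push_cast
    ring
  · rw [if_neg (by omega), if_neg (by omega), if_neg (by omega)]
    ring

lemma sum_range_binomPMF_succ (n : ℕ) (ε : ℝ) (j : ℕ) :
    ∑ k ∈ range (j + 1), binomPMF (n + 1) ε k =
      ∑ k ∈ range (j + 1), binomPMF n ε k - ε * binomPMF n ε j := by
  induction j with
  | zero =>
    rw [zero_add, sum_range_one, sum_range_one, binomPMF_succ_zero]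
    ring
  | succ j ih =>
    rw [sum_range_succ, ih, sum_range_succ _ (j + 1), binomPMF_succ_succ]
    ring

lemma stepFn_eq (p c : ℝ) (i j : ℕ) :
    stepFn p c i j = (if j = i + 1 then p else 0) + (1 - p) * binomPMF i (1 - c) j := by
  by_cases h : j ≤ i
  · simp [stepFn, h]
  · simp [stepFn, h, binomPMF_eq_zero_of_lt _ (Nat.lt_of_not_le h)]

lemma sum_range_stepFn (p c : ℝ) (i j : ℕ) :
    ∑ k ∈ range (j + 1), stepFn p c i k =
      (if i + 1 ≤ j then p else 0) + (1 - p) * ∑ k ∈ range (j + 1), binomPMF i (1 - c) k := by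
  simp only [stepFn_eq, sum_add_distrib, sum_ite_eq', mem_range, ← mul_sum, Nat.lt_succ_iff]

lemma sum_range_stepFn_sub_succ (p c : ℝ) (i j : ℕ) :
    ∑ k ∈ range (j + 1), stepFn p c i k - ∑ k ∈ range (j + 1), stepFn p c (i + 1) k =
      (if j = i + 1 then p else 0) + (1 - p) * (1 - c) * binomPMF i (1 - c) j := by
  rw [sum_range_stepFn, sum_range_stepFn, sum_range_binomPMF_succ]
  split_ifs <;> first | omega | ring

lemma mul_stepFn_div {p c : ℝ} (hα : 1 - c * (1 - p) ≠ 0) (i j : ℕ) :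
    (1 - c * (1 - p)) * stepFn (p / (1 - c * (1 - p))) c i j =
      (if j = i + 1 then p else 0) + (1 - p) * (1 - c) * binomPMF i (1 - c) j := by
  rw [stepFn_eq, mul_add, mul_ite, mul_div_cancel₀ _ hα, mul_zero, ← mul_assoc, mul_one_sub,
    mul_div_cancel₀ _ hα]
  ring

lemma law_eq_zero_of_lt {p c : ℝ} {x : ℕ} : ∀ {t i : ℕ}, x + t < i → law p c x t i = 0
  | 0, i, h => if_neg (by omega)
  | t + 1, i, h => by
    refine (tsum_congr fun k => ?_).trans tsum_zero
    by_cases hk : x + t < k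
    · rw [law_eq_zero_of_lt hk, zero_mul]
    · rw [stepFn, if_neg (by omega), if_neg (by omega), add_zero, mul_zero]

lemma law_succ_eq_sum {p c : ℝ} {x t N : ℕ} (hN : x + t < N) (j : ℕ) :
    law p c x (t + 1) j = ∑ i ∈ range N, law p c x t i * stepFn p c i j :=
  tsum_eq_sum fun i hi => by
    rw [law_eq_zero_of_lt (by simp at hi; omega), zero_mul]

lemma sum_range_law_succ {p c : ℝ} {x t N : ℕ} (hN : x + t < N) (j : ℕ) :
    ∑ k ∈ range (j + 1), law p c x (t + 1) k =
      ∑ i ∈ range N, (∑ k ∈ range (j + 1), stepFn p c i k) * law p c x t i := by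
  simp only [law_succ_eq_sum hN, sum_mul]
  rw [sum_comm]
  simp only [mul_comm]

theorem sum_range_law_sub_succ {p c : ℝ} (hα : 1 - c * (1 - p) ≠ 0) (x t j : ℕ) :
    ∑ k ∈ range (j + 1), law p c x t k - ∑ k ∈ range (j + 1), law p c (x + 1) t k =
      (1 - c * (1 - p)) ^ t * law (p / (1 - c * (1 - p))) c x t j := by
  set α := 1 - c * (1 - p)
  set q := p / α
  induction t generalizing j with
  | zero =>
    simp only [law, sum_ite_eq', mem_range, pow_zero, one_mul]
    split_ifs <;> first | omega | norm_num
  | succ t ih =>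
    set S := fun i => ∑ k ∈ range (j + 1), stepFn p c i k
    have partial_sum (i : ℕ) :
        ∑ k ∈ range (i + 1), (law p c x t k - law p c (x + 1) t k) = α ^ t * law q c x t i := by
      rw [sum_sub_distrib, ih]
    calc _ = ∑ i ∈ range (x + t + 2), S i * (law p c x t i - law p c (x + 1) t i) := by
          rw [sum_range_law_succ (N := x + t + 2) (by omega),
            sum_range_law_succ (N := x + t + 2) (by omega), ← sum_sub_distrib]
          simp only [S, mul_sub]
      _ = ∑ i ∈ range (x + t + 1), (S i - S (i + 1)) * (α ^ t * law q c x t i) := by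
          have by_parts := sum_range_by_parts S
            (fun i => law p c x t i - law p c (x + 1) t i) (n := x + t + 2)
          simp only [smul_eq_mul, partial_sum, law_eq_zero_of_lt (show x + t < x + t + 1 by omega),
            mul_zero, zero_sub, ← sum_neg_distrib] at by_parts
          rw [by_parts]
          exact sum_congr rfl fun i _ => by ring
      _ = α ^ (t + 1) * ∑ i ∈ range (x + t + 1), law q c x t i * stepFn q c i j := by
          rw [mul_sum]
          refine sum_congr rfl fun i _ => ?_
          rw [sum_range_stepFn_sub_succ, ← mul_stepFn_div hα, pow_succ]
          ring
      _ = _ := by rw [law_succ_eq_sum (N := x + t + 1) (by omega)]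

/-- **Lemma 3.6.** Let `α = 1 - c(1-p)`, `p̃ = p/α` and `A_j = {0, …, j}`. Then
`P_x(X_t ∈ A_j) - P_{x+1}(X_t ∈ A_j) = α^t P_x^{(p̃)}(X_t = j)`; in particular `≥` holds. -/
theorem monotone_difference_formula
    (p c : ℝ) (hp : p ∈ Set.Ioo (0 : ℝ) 1) (hc : c ∈ Set.Ioc (0 : ℝ) 1)
    (x t j : ℕ) :
    ((∑ k ∈ Finset.range (j + 1), law p c x t k) -
        (∑ k ∈ Finset.range (j + 1), law p c (x + 1) t k) =
      (1 - c * (1 - p)) ^ t * law (p / (1 - c * (1 - p))) c x t j) ∧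
    (1 - c * (1 - p)) ^ t * law (p / (1 - c * (1 - p))) c x t j ≤
      (∑ k ∈ Finset.range (j + 1), law p c x t k) -
        (∑ k ∈ Finset.range (j + 1), law p c (x + 1) t k) := by
  have hα : 1 - c * (1 - p) ≠ 0 := by
    nlinarith [hp.1, hp.2, hc.1, hc.2]
  have h := sum_range_law_sub_succ hα x t j
  exact ⟨h, h.ge⟩
end
end

section
/- Suppose p_n, c_n ∈ (0,1) for n ∈ ℕ, with p_n → 0 and p_n/c_n → β ∈ (0,∞) as n → ∞. Let π^{(n)} denote the stationary distribution of the random walk with binomial catastrophes with parameters (p_n, c_n). Then π^{(n)} converges weakly to the Poisson distribution with mean β as n → ∞. -/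
open scoped BigOperators
open Filter

noncomputable section

/-!
Let `G` be the generating function of a stationary law `π`. Conditioning on the last step gives
`G(s) (1 - p s) = (1 - p) G((1 - c) s + c)`; iterating the affine map towards its fixed point `1`
turns `-log G(s)` into `∑ j, log (1 + x (1 - c)^j)` with `x = p (1 - s) / (1 - p)`. Since
`y / (1 + x) ≤ log (1 + y) ≤ y` for `0 ≤ y ≤ x`, `-log G(s)` lies between `x / (c (1 + x))` and
`x / c`, and both tend to `β (1 - s)`. Hence the generating functions converge on `(0, 1)` to the
Poisson one `exp (-β (1 - s))`, and the probabilities themselves converge, as one sees by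
peeling off the coefficients one at a time for small `s`.
-/

open Topology Finset

def pgf (q : ℕ → ℝ) (s : ℝ) : ℝ := ∑' k, q k * s ^ k

section GeneratingFunction

variable {q r : ℕ → ℝ} {s : ℝ}

lemma summable_pgf (hq0 : ∀ k, 0 ≤ q k) (hq : Summable q) (hs0 : 0 ≤ s) (hs1 : s ≤ 1) :
    Summable fun k => q k * s ^ k :=
  hq.of_nonneg_of_le (fun k => mul_nonneg (hq0 k) (pow_nonneg hs0 k))
    (fun k => mul_le_of_le_one_right (hq0 k) (pow_le_one₀ hs0 hs1))

lemma pgf_pos (hq0 : ∀ k, 0 ≤ q k) (hq : HasSum q 1) (hs0 : 0 < s) (hs1 : s ≤ 1) :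
    0 < pgf q s := by
  obtain ⟨k, hk⟩ : ∃ k, q k ≠ 0 := by
    by_contra! h
    rw [show q = 0 from funext h] at hq
    exact one_ne_zero (hq.unique hasSum_zero)
  exact (summable_pgf hq0 hq.summable hs0.le hs1).tsum_pos
    (fun j => mul_nonneg (hq0 j) (pow_nonneg hs0.le j)) k
    (mul_pos ((hq0 k).lt_of_ne' hk) (pow_pos hs0 k))

lemma continuousOn_pgf (hq0 : ∀ k, 0 ≤ q k) (hq : Summable q) :
    ContinuousOn (pgf q) (Set.Icc 0 1) := by
  refine continuousOn_tsum (fun k => (continuous_const.mul (continuous_pow k)).continuousOn) hq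
    fun k x hx => ?_
  rw [Real.norm_eq_abs, abs_of_nonneg (mul_nonneg (hq0 k) (pow_nonneg hx.1 k))]
  exact mul_le_of_le_one_right (hq0 k) (pow_le_one₀ hx.1 hx.2)

lemma pgf_sub_sum_range_mem_Icc (hq0 : ∀ k, 0 ≤ q k) (hq : HasSum q 1) (hs0 : 0 ≤ s)
    (hs1 : s ≤ 1) (m : ℕ) :
    pgf q s - ∑ j ∈ range m, q j * s ^ j ∈ Set.Icc 0 (s ^ m) := by
  have hsum := summable_pgf hq0 hq.summable hs0 hs1
  have htail : ∑' j, q (j + m) ≤ 1 := by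
    have h := hq.summable.sum_add_tsum_nat_add m
    rw [hq.tsum_eq] at h
    linarith [sum_nonneg fun j (_ : j ∈ range m) => hq0 j]
  rw [pgf, ← hsum.sum_add_tsum_nat_add m, add_sub_cancel_left]
  refine ⟨tsum_nonneg fun j => mul_nonneg (hq0 _) (pow_nonneg hs0 _), ?_⟩
  calc ∑' j, q (j + m) * s ^ (j + m)
      ≤ ∑' j, q (j + m) * s ^ m :=
        ((summable_nat_add_iff m).2 hsum).tsum_le_tsum
          (fun j => mul_le_mul_of_nonneg_left (pow_le_pow_of_le_one hs0 hs1 (by omega)) (hq0 _))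
          (((summable_nat_add_iff m).2 hq.summable).mul_right _)
    _ = (∑' j, q (j + m)) * s ^ m := tsum_mul_right
    _ ≤ s ^ m := mul_le_of_le_one_left (pow_nonneg hs0 m) htail

lemma abs_sub_le_of_pgf (hq0 : ∀ k, 0 ≤ q k) (hq : HasSum q 1) (hr0 : ∀ k, 0 ≤ r k)
    (hr : HasSum r 1) (hs0 : 0 < s) (hs1 : s ≤ 1) (k : ℕ) :
    |q k - r k| ≤ (|pgf q s - pgf r s| + ∑ j ∈ range k, |q j - r j|) / s ^ k + s := by
  have hsk : 0 < s ^ k := pow_pos hs0 k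
  obtain ⟨hq₁, hq₂⟩ := pgf_sub_sum_range_mem_Icc hq0 hq hs0.le hs1 (k + 1)
  obtain ⟨hr₁, hr₂⟩ := pgf_sub_sum_range_mem_Icc hr0 hr hs0.le hs1 (k + 1)
  rw [sum_range_succ] at hq₁ hq₂ hr₁ hr₂
  rw [pow_succ'] at hq₂ hr₂
  have hhead : |∑ j ∈ range k, q j * s ^ j - ∑ j ∈ range k, r j * s ^ j|
      ≤ ∑ j ∈ range k, |q j - r j| := by
    rw [← sum_sub_distrib]
    refine (abs_sum_le_sum_abs _ _).trans (sum_le_sum fun j _ => ?_)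
    rw [← sub_mul, abs_mul, abs_of_pos (pow_pos hs0 j)]
    exact mul_le_of_le_one_right (abs_nonneg _) (pow_le_one₀ hs0.le hs1)
  have hmain : |q k - r k| * s ^ k
      ≤ |pgf q s - pgf r s| + ∑ j ∈ range k, |q j - r j| + s * s ^ k := by
    rw [show |q k - r k| * s ^ k = |(q k - r k) * s ^ k| by rw [abs_mul, abs_of_pos hsk],
      abs_le]
    constructor <;> linarith [abs_le.1 hhead, le_abs_self (pgf q s - pgf r s),
      neg_abs_le (pgf q s - pgf r s)]
  rw [div_add' _ _ _ hsk.ne', le_div_iff₀ hsk]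
  linarith

theorem tendsto_of_tendsto_pgf {ι : Type*} {l : Filter ι} {q : ι → ℕ → ℝ}
    (hq0 : ∀ n k, 0 ≤ q n k) (hq : ∀ n, HasSum (q n) 1) (hr0 : ∀ k, 0 ≤ r k) (hr : HasSum r 1)
    (h : ∀ s ∈ Set.Ioo (0 : ℝ) 1, Tendsto (fun n => pgf (q n) s) l (𝓝 (pgf r s))) (k : ℕ) :
    Tendsto (fun n => q n k) l (𝓝 (r k)) := by
  induction k using Nat.strong_induction_on with
  | _ k ih =>
  rw [Metric.tendsto_nhds]
  intro ε hε
  set s := min (1 / 2 : ℝ) (ε / 2)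
  have hs : s ∈ Set.Ioo (0 : ℝ) 1 :=
    ⟨lt_min (by norm_num) (by positivity), (min_le_left _ _).trans_lt (by norm_num)⟩
  have hbound : Tendsto
      (fun n => (|pgf (q n) s - pgf r s| + ∑ j ∈ range k, |q n j - r j|) / s ^ k) l (𝓝 0) := by
    have hpgf := ((h s hs).sub_const (pgf r s)).abs
    have hhead := tendsto_finsetSum (range k) fun j hj =>
      ((ih j (mem_range.1 hj)).sub_const (r j)).abs
    simpa using (hpgf.add hhead).div_const (s ^ k)
  filter_upwards [hbound.eventually (gt_mem_nhds (half_pos hε))] with n hn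
  rw [Real.dist_eq]
  calc |q n k - r k| ≤ _ + s := abs_sub_le_of_pgf (hq0 n) (hq n) hr0 hr hs.1 hs.2.le k
    _ < ε / 2 + ε / 2 := add_lt_add_of_lt_of_le hn (min_le_right _ _)
    _ = ε := add_halves ε

end GeneratingFunction

lemma hasSum_poisson_mul_pow (β s : ℝ) :
    HasSum (fun k => Real.exp (-β) * β ^ k / (Nat.factorial k : ℝ) * s ^ k)
      (Real.exp (-(β * (1 - s)))) := by
  have h := (NormedSpace.expSeries_div_hasSum_exp (β * s)).mul_left (Real.exp (-β))
  rw [← Real.exp_eq_exp_ℝ, ← Real.exp_add] at h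
  have hterm : (fun k => Real.exp (-β) * β ^ k / (Nat.factorial k : ℝ) * s ^ k)
      = fun k => Real.exp (-β) * ((β * s) ^ k / (Nat.factorial k : ℝ)) := by
    funext k
    rw [mul_pow]
    ring
  rwa [hterm, show -(β * (1 - s)) = -β + β * s by ring]

lemma hasSum_binomPMF_mul_pow (n : ℕ) (ε s : ℝ) :
    HasSum (fun k => binomPMF n ε k * s ^ k) ((ε * s + (1 - ε)) ^ n) := by
  have hsum : (ε * s + (1 - ε)) ^ n = ∑ k ∈ range (n + 1), binomPMF n ε k * s ^ k := by
    rw [add_pow]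
    refine sum_congr rfl fun k hk => ?_
    rw [binomPMF, if_pos (Nat.lt_succ_iff.1 (mem_range.1 hk))]
    ring
  rw [hsum]
  refine hasSum_sum_of_ne_finset_zero fun k hk => ?_
  rw [binomPMF, if_neg (by simpa [Nat.lt_succ_iff] using hk), zero_mul]

lemma binomPMF_nonneg {ε : ℝ} (hε : ε ∈ Set.Icc 0 1) (n k : ℕ) : 0 ≤ binomPMF n ε k := by
  unfold binomPMF
  split_ifs
  · exact mul_nonneg (mul_nonneg (Nat.cast_nonneg _) (pow_nonneg hε.1 _))
      (pow_nonneg (sub_nonneg.2 hε.2) _)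
  · exact le_rfl

lemma stepFn_nonneg {p c : ℝ} (hp : p ∈ Set.Icc 0 1) (hc : c ∈ Set.Icc 0 1) (i j : ℕ) :
    0 ≤ stepFn p c i j := by
  have hb := binomPMF_nonneg ⟨sub_nonneg.2 hc.2, sub_le_self 1 hc.1⟩ i j
  unfold stepFn
  split_ifs <;> nlinarith [hp.1, hp.2]

lemma hasSum_stepFn_mul_pow (p c : ℝ) (i : ℕ) (s : ℝ) :
    HasSum (fun j => stepFn p c i j * s ^ j)
      (p * s ^ (i + 1) + (1 - p) * ((1 - c) * s + c) ^ i) := by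
  have hup := hasSum_ite_eq (i + 1) (p * s ^ (i + 1))
  have hdown := (hasSum_binomPMF_mul_pow i (1 - c) s).mul_left (1 - p)
  rw [sub_sub_cancel] at hdown
  convert hup.add hdown using 2 with j
  unfold stepFn binomPMF
  split_ifs <;> first | omega | (subst_vars; ring)

section Stationary

variable {p c : ℝ} {π : ℕ → ℝ} {s : ℝ}

lemma pgf_mul_one_sub_of_stationary (hp : p ∈ Set.Icc 0 1) (hc : c ∈ Set.Icc 0 1)
    (hπ0 : ∀ k, 0 ≤ π k) (hπ : Summable π) (hπs : ∀ j, ∑' i, π i * stepFn p c i j = π j)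
    (hs0 : 0 ≤ s) (hs1 : s ≤ 1) :
    pgf π s * (1 - p * s) = (1 - p) * pgf π ((1 - c) * s + c) := by
  set t := (1 - c) * s + c
  have ht0 : 0 ≤ t := by nlinarith [hc.1, hc.2]
  have ht1 : t ≤ 1 := by nlinarith [hc.1, hc.2]
  set F : ℕ → ℕ → ℝ := fun i j => π i * (stepFn p c i j * s ^ j)
  have hrow : ∀ i, HasSum (F i) (p * s * (π i * s ^ i) + (1 - p) * (π i * t ^ i)) := by
    intro i
    have h := (hasSum_stepFn_mul_pow p c i s).mul_left (π i)
    rwa [show π i * (p * s ^ (i + 1) + (1 - p) * t ^ i)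
      = p * s * (π i * s ^ i) + (1 - p) * (π i * t ^ i) by ring] at h
  have hF : Summable (Function.uncurry F) := by
    refine (summable_prod_of_nonneg fun x => ?_).2 ⟨fun i => (hrow i).summable, ?_⟩
    · exact mul_nonneg (hπ0 _) (mul_nonneg (stepFn_nonneg hp hc _ _) (pow_nonneg hs0 _))
    · exact (((summable_pgf hπ0 hπ hs0 hs1).mul_left _).add
        ((summable_pgf hπ0 hπ ht0 ht1).mul_left _)).congr fun i => (hrow i).tsum_eq.symm
  have hbalance : pgf π s = p * s * pgf π s + (1 - p) * pgf π t :=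
    calc pgf π s = ∑' j, ∑' i, F i j := by
          refine tsum_congr fun j => ?_
          rw [← hπs j, ← tsum_mul_right]
          exact tsum_congr fun i => mul_assoc _ _ _
      _ = ∑' i, ∑' j, F i j := hF.tsum_comm
      _ = ∑' i, (p * s * (π i * s ^ i) + (1 - p) * (π i * t ^ i)) :=
          tsum_congr fun i => (hrow i).tsum_eq
      _ = p * s * pgf π s + (1 - p) * pgf π t := by
          rw [Summable.tsum_add ((summable_pgf hπ0 hπ hs0 hs1).mul_left _)
            ((summable_pgf hπ0 hπ ht0 ht1).mul_left _), tsum_mul_left, tsum_mul_left, pgf, pgf]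
  linear_combination hbalance

lemma pgf_mul_prod_of_stationary (hp : p ∈ Set.Ico 0 1) (hc : c ∈ Set.Icc 0 1)
    (hπ0 : ∀ k, 0 ≤ π k) (hπ : Summable π) (hπs : ∀ j, ∑' i, π i * stepFn p c i j = π j)
    (hs0 : 0 ≤ s) (hs1 : s ≤ 1) (m : ℕ) :
    pgf π s * ∏ j ∈ range m, (1 + p * (1 - s) / (1 - p) * (1 - c) ^ j)
      = pgf π (1 - (1 - c) ^ m * (1 - s)) := by
  induction m with
  | zero => simp
  | succ m ih =>
    set t := 1 - (1 - c) ^ m * (1 - s)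
    have hcm : (1 - c) ^ m ∈ Set.Icc (0 : ℝ) 1 :=
      ⟨pow_nonneg (sub_nonneg.2 hc.2) m, pow_le_one₀ (sub_nonneg.2 hc.2) (sub_le_self 1 hc.1)⟩
    have ht0 : 0 ≤ t := by nlinarith [hcm.1, hcm.2]
    have ht1 : t ≤ 1 := by nlinarith [hcm.1, hcm.2]
    have h := pgf_mul_one_sub_of_stationary (Set.Ico_subset_Icc_self hp) hc hπ0 hπ hπs ht0 ht1
    have hp1 : 1 - p ≠ 0 := (sub_pos.2 hp.2).ne'
    rw [prod_range_succ, ← mul_assoc, ih,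
      show 1 - (1 - c) ^ (m + 1) * (1 - s) = (1 - c) * t + c by ring]
    field_simp
    linear_combination h

lemma hasSum_log_of_stationary (hp : p ∈ Set.Ico 0 1) (hc : c ∈ Set.Ioc 0 1)
    (hπ0 : ∀ k, 0 ≤ π k) (hπ : HasSum π 1) (hπs : ∀ j, ∑' i, π i * stepFn p c i j = π j)
    (hs : s ∈ Set.Ioc 0 1) :
    HasSum (fun j => Real.log (1 + p * (1 - s) / (1 - p) * (1 - c) ^ j))
      (-Real.log (pgf π s)) := by
  set x := p * (1 - s) / (1 - p)
  have hx : 0 ≤ x := div_nonneg (mul_nonneg hp.1 (sub_nonneg.2 hs.2)) (sub_nonneg.2 hp.2.le)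
  have hc' : 0 ≤ 1 - c := sub_nonneg.2 hc.2
  have hterm : ∀ j, 1 ≤ 1 + x * (1 - c) ^ j := fun j =>
    le_add_of_nonneg_right (mul_nonneg hx (pow_nonneg hc' j))
  set t : ℕ → ℝ := fun m => 1 - (1 - c) ^ m * (1 - s)
  have ht : ∀ m, t m ∈ Set.Icc s 1 := fun m => by
    have hcm : (1 - c) ^ m ≤ 1 := pow_le_one₀ hc' (sub_le_self 1 hc.1.le)
    constructor <;> nlinarith [pow_nonneg hc' m, hs.2]
  have hpartial : ∀ m, ∑ j ∈ range m, Real.log (1 + x * (1 - c) ^ j)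
      = Real.log (pgf π (t m)) - Real.log (pgf π s) := fun m => by
    rw [← Real.log_prod fun j _ => (one_pos.trans_le (hterm j)).ne',
      ← pgf_mul_prod_of_stationary hp (Set.Ioc_subset_Icc_self hc) hπ0 hπ.summable hπs hs.1.le
        hs.2,
      Real.log_mul (pgf_pos hπ0 hπ hs.1 hs.2).ne'
        (prod_pos fun j _ => one_pos.trans_le (hterm j)).ne', add_sub_cancel_left]
  have ht_lim : Tendsto t atTop (𝓝[Set.Icc 0 1] 1) := by
    refine tendsto_nhdsWithin_iff.2
      ⟨?_, Eventually.of_forall fun m => ⟨hs.1.le.trans (ht m).1, (ht m).2⟩⟩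
    simpa [t] using ((tendsto_pow_atTop_nhds_zero_of_lt_one hc' (sub_lt_self 1 hc.1)).mul_const
      (1 - s)).const_sub 1
  have hpgf_lim : Tendsto (fun m => pgf π (t m)) atTop (𝓝 1) := by
    have h := ((continuousOn_pgf hπ0 hπ.summable) 1 ⟨zero_le_one, le_rfl⟩).tendsto.comp ht_lim
    rwa [show pgf π 1 = 1 by simpa [pgf] using hπ.tsum_eq] at h
  rw [hasSum_iff_tendsto_nat_of_nonneg fun j => Real.log_nonneg (hterm j)]
  simp_rw [hpartial]
  simpa using ((Real.continuousAt_log one_ne_zero).tendsto.comp hpgf_lim).sub_const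
    (Real.log (pgf π s))

lemma neg_log_pgf_mem_of_stationary (hp : p ∈ Set.Ico 0 1) (hc : c ∈ Set.Ioc 0 1)
    (hπ0 : ∀ k, 0 ≤ π k) (hπ : HasSum π 1) (hπs : ∀ j, ∑' i, π i * stepFn p c i j = π j)
    (hs : s ∈ Set.Ioc 0 1) :
    -Real.log (pgf π s) ∈ Set.Icc (p * (1 - s) / (1 - p) / c / (1 + p * (1 - s) / (1 - p)))
      (p * (1 - s) / (1 - p) / c) := by
  set x := p * (1 - s) / (1 - p)
  have hx : 0 ≤ x := div_nonneg (mul_nonneg hp.1 (sub_nonneg.2 hs.2)) (sub_nonneg.2 hp.2.le)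
  have hc' : 0 ≤ 1 - c := sub_nonneg.2 hc.2
  have hgeo : HasSum (fun j => x * (1 - c) ^ j) (x / c) := by
    have h := (hasSum_geometric_of_lt_one hc' (sub_lt_self 1 hc.1)).mul_left x
    rwa [sub_sub_cancel, ← div_eq_mul_inv] at h
  have hlog := hasSum_log_of_stationary hp hc hπ0 hπ hπs hs
  refine ⟨hasSum_le (fun j => ?_) (hgeo.div_const (1 + x)) hlog,
    hasSum_le (fun j => ?_) hlog hgeo⟩
  · set y := x * (1 - c) ^ j
    have hy : 0 ≤ y := mul_nonneg hx (pow_nonneg hc' j)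
    have hyx : y ≤ x := mul_le_of_le_one_right hx (pow_le_one₀ hc' (sub_le_self 1 hc.1.le))
    calc y / (1 + x) = 2 * y / (2 + 2 * x) := by
          rw [show 2 + 2 * x = 2 * (1 + x) by ring, mul_div_mul_left _ _ two_ne_zero]
      _ ≤ 2 * y / (y + 2) := div_le_div_of_nonneg_left (by positivity) (by positivity)
          (by linarith)
      _ ≤ Real.log (1 + y) := Real.le_log_one_add_of_nonneg hy
  · have := Real.log_le_sub_one_of_pos (x := 1 + x * (1 - c) ^ j)
      (add_pos_of_pos_of_nonneg one_pos (mul_nonneg hx (pow_nonneg hc' j)))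
    linarith

lemma tendsto_pgf_of_stationary {p c : ℕ → ℝ} {π : ℕ → ℕ → ℝ} {β s : ℝ}
    (hp : ∀ n, p n ∈ Set.Ico 0 1) (hc : ∀ n, c n ∈ Set.Ioc 0 1) (hp0 : Tendsto p atTop (𝓝 0))
    (hratio : Tendsto (fun n => p n / c n) atTop (𝓝 β)) (hπ0 : ∀ n k, 0 ≤ π n k)
    (hπ : ∀ n, HasSum (π n) 1) (hπs : ∀ n j, ∑' i, π n i * stepFn (p n) (c n) i j = π n j)
    (hs : s ∈ Set.Ioc 0 1) :
    Tendsto (fun n => pgf (π n) s) atTop (𝓝 (Real.exp (-(β * (1 - s))))) := by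
  set x := fun n => p n * (1 - s) / (1 - p n)
  have h1p : Tendsto (fun n => 1 - p n) atTop (𝓝 1) := by
    simpa using tendsto_const_nhds.sub hp0
  have hx : Tendsto x atTop (𝓝 0) := by
    have h := (hp0.mul_const (1 - s)).div h1p one_ne_zero
    rw [zero_mul, zero_div] at h
    exact h
  have hxc : Tendsto (fun n => x n / c n) atTop (𝓝 (β * (1 - s))) := by
    have h := (hratio.mul_const (1 - s)).div h1p one_ne_zero
    rw [div_one] at h
    exact h.congr fun n => by simp only [Pi.div_apply, x]; ring
  have hxc' : Tendsto (fun n => x n / c n / (1 + x n)) atTop (𝓝 (β * (1 - s))) := by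
    have h := hxc.div (by simpa using tendsto_const_nhds.add hx :
      Tendsto (fun n => 1 + x n) atTop (𝓝 1)) one_ne_zero
    rw [div_one] at h
    exact h
  have hlog : Tendsto (fun n => -Real.log (pgf (π n) s)) atTop (𝓝 (β * (1 - s))) :=
    tendsto_of_tendsto_of_tendsto_of_le_of_le hxc' hxc
      (fun n => (neg_log_pgf_mem_of_stationary (hp n) (hc n) (hπ0 n) (hπ n) (hπs n) hs).1)
      (fun n => (neg_log_pgf_mem_of_stationary (hp n) (hc n) (hπ0 n) (hπ n) (hπs n) hs).2)
  refine ((Real.continuous_exp.tendsto _).comp hlog.neg).congr fun n => ?_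
  simp [Real.exp_log (pgf_pos (hπ0 n) (hπ n) hs.1 hs.2)]

end Stationary

/-- **Theorem 4.2.** Suppose `p_n, c_n ∈ (0,1)` with `p_n → 0` and `p_n/c_n → β ∈ (0,∞)`.
Then the stationary distributions `π^{(n)}` converge weakly (equivalently, pointwise on ℕ)
to the Poisson distribution with mean `β`. -/
theorem stationary_poisson_limit
    (p c : ℕ → ℝ) (hp : ∀ n, p n ∈ Set.Ioo (0 : ℝ) 1) (hc : ∀ n, c n ∈ Set.Ioo (0 : ℝ) 1)
    (hp0 : Tendsto p atTop (nhds 0))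
    (β : ℝ) (hβ : 0 < β) (hratio : Tendsto (fun n => p n / c n) atTop (nhds β))
    (piD : ℕ → ℕ → ℝ) (hpi0 : ∀ n k, 0 ≤ piD n k) (hpi1 : ∀ n, ∑' k, piD n k = 1)
    (hpis : ∀ n j, ∑' i, piD n i * stepFn (p n) (c n) i j = piD n j) :
    ∀ k : ℕ,
      Tendsto (fun n => piD n k) atTop
        (nhds (Real.exp (-β) * β ^ k / (Nat.factorial k : ℝ))) := by
  have hpi : ∀ n, HasSum (piD n) 1 := fun n => by
    have hsum : Summable (piD n) := by
      by_contra h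
      simpa [tsum_eq_zero_of_not_summable h] using hpi1 n
    exact hpi1 n ▸ hsum.hasSum
  have hpoisson : HasSum (fun k => Real.exp (-β) * β ^ k / (Nat.factorial k : ℝ)) 1 := by
    simpa using hasSum_poisson_mul_pow β 1
  refine tendsto_of_tendsto_pgf hpi0 hpi (fun k => by positivity) hpoisson fun s hs => ?_
  rw [pgf, (hasSum_poisson_mul_pow β s).tsum_eq]
  exact tendsto_pgf_of_stationary (fun n => Set.Ioo_subset_Ico_self (hp n))
    (fun n => Set.Ioo_subset_Ioc_self (hc n)) hp0 hratio hpi0 hpi hpis (Set.Ioo_subset_Ioc_self hs)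
end
end
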